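/- arXiv:2312.16889 — 4 statements merged into one kernel-verified Lean document; each statement's English description precedes it below -/
import Mathlib

section
/- Fix an integer n ≥ 2 and a real number R₁ > 0, and let f₁(r) = r − R₁ⁿ/r^{n−1}. Define F : [R₁,∞) → ℝ by F(r) = (f₁'(r))² + ((n−1)/r²)·f₁(r)². Then F(r) = n·(1 + (n−1)·(R₁/r)^{2n}) for all r ≥ R₁, and F is a strictly decreasing function on [R₁,∞). -/
/-!
Writing `t = (R₁/r)ⁿ`, one has `f₁'(r) = 1 + (n−1)t` and `f₁(r)/r = 1 − t`, so
`F = (1 + (n−1)t)² + (n−1)(1 − t)²`: the cross terms cancel and `F = n(1 + (n−1)t²)`.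
As `t` decreases strictly in `r` and `n − 1 > 0`, so does `F`.
-/

open Set

theorem hasDerivAt_sub_div_pow (c : ℝ) (k : ℕ) {r : ℝ} (hr : r ≠ 0) :
    HasDerivAt (fun x : ℝ => x - c / x ^ k) (1 + k * c / r ^ (k + 1)) r := by
  refine ((hasDerivAt_id' r).sub
    ((hasDerivAt_const r c).div (hasDerivAt_pow k r) (pow_ne_zero k hr))).congr_deriv ?_
  rcases k with _ | k
  · simp
  · rw [Nat.add_sub_cancel]
    field_simp
    ring

theorem sq_one_add_mul_add_mul_sq_one_sub (a t : ℝ) :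
    (1 + (a - 1) * t) ^ 2 + (a - 1) * (1 - t) ^ 2 = a * (1 + (a - 1) * t ^ 2) := by
  ring

theorem strictAntiOn_mul_one_add_mul_div_pow {a R : ℝ} (ha : 1 < a) (hR : 0 < R) {k : ℕ}
    (hk : k ≠ 0) : StrictAntiOn (fun r : ℝ => a * (1 + (a - 1) * (R / r) ^ k)) (Ioi 0) := by
  intro r hr s hs hrs
  have hquot : R / s < R / r := div_lt_div_of_pos_left hR hr hrs
  have hpow : (R / s) ^ k < (R / r) ^ k := pow_lt_pow_left₀ hquot (div_pos hR hs).le hk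
  have ha' : 0 < a - 1 := sub_pos.mpr ha
  dsimp only
  gcongr

/-- For `f₁(r) = r − R₁ⁿ/r^{n−1}`, the function
`F(r) = f₁'(r)² + ((n−1)/r²) f₁(r)²` equals `n (1 + (n−1)(R₁/r)^{2n})` on `[R₁,∞)`
and is strictly decreasing there. -/
theorem F_formula_and_strictAnti (n : ℕ) (hn : 2 ≤ n) (R₁ : ℝ) (hR₁ : 0 < R₁)
    (f₁ F : ℝ → ℝ)
    (hf₁ : ∀ r : ℝ, f₁ r = r - R₁ ^ n / r ^ (n - 1))
    (hF : ∀ r : ℝ, F r = (deriv f₁ r) ^ 2 + ((n : ℝ) - 1) / r ^ 2 * (f₁ r) ^ 2) :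
    (∀ r : ℝ, R₁ ≤ r → F r = n * (1 + ((n : ℝ) - 1) * (R₁ / r) ^ (2 * n))) ∧
    StrictAntiOn F (Set.Ici R₁) := by
  obtain ⟨k, rfl⟩ : ∃ k, n = k + 1 := ⟨n - 1, by omega⟩
  have hformula : ∀ r : ℝ, R₁ ≤ r →
      F r = (k + 1 : ℕ) * (1 + (((k + 1 : ℕ) : ℝ) - 1) * (R₁ / r) ^ (2 * (k + 1))) := by
    intro r hr
    have hr0 : r ≠ 0 := (hR₁.trans_le hr).ne'
    have hderiv : deriv f₁ r = 1 + k * R₁ ^ (k + 1) / r ^ (k + 1) := by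
      rw [funext hf₁, Nat.add_sub_cancel]
      exact (hasDerivAt_sub_div_pow _ k hr0).deriv
    calc F r = (1 + (((k + 1 : ℕ) : ℝ) - 1) * (R₁ / r) ^ (k + 1)) ^ 2
          + (((k + 1 : ℕ) : ℝ) - 1) * (1 - (R₁ / r) ^ (k + 1)) ^ 2 := by
          rw [hF, hderiv, hf₁, Nat.add_sub_cancel, div_pow]
          push_cast
          field_simp
          ring
      _ = _ := by rw [sq_one_add_mul_add_mul_sq_one_sub, ← pow_mul, mul_comm (k + 1)]
  refine ⟨hformula, StrictAntiOn.congr ?_ fun r hr => (hformula r hr).symm⟩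
  exact (strictAntiOn_mul_one_add_mul_div_pow (by exact_mod_cast hn) hR₁ (by omega)).mono
    fun r hr => hR₁.trans_le hr
end

section
/- Fix an integer n ≥ 2, a real number R₁ > 0, and let f₁(r) = r − R₁ⁿ/r^{n−1}. Let Ω ⊆ ℝⁿ\{0} be a bounded measurable set that is invariant under the rotation by angle π/2 in every coordinate plane (xᵢ,xⱼ), i ≠ j. Define uᵢ(x) = f₁(‖x‖)·xᵢ/‖x‖ and u₀(x) = f₁(‖x‖). Then for every index i ∈ {1,…,n}, ∫_Ω ⟨∇u₀(x), ∇uᵢ(x)⟩ dV = 0. -/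
open MeasureTheory RealInnerProductSpace

/-- The rotation by angle `π/2` in the `(xᵢ, xⱼ)`-coordinate plane of `ℝⁿ`:
it sends `xᵢ ↦ −xⱼ`, `xⱼ ↦ xᵢ` and fixes all the other coordinates. -/
def planeRotation (n : ℕ) (i j : Fin n)
    (x : EuclideanSpace ℝ (Fin n)) : EuclideanSpace ℝ (Fin n) :=
  WithLp.toLp 2 (fun k => if k = i then -(x j) else if k = j then x i else x k)

/-!
Negating the coordinates `xᵢ` and `xⱼ` (`j ≠ i`) is the square of a rotation by `π/2`, so it
preserves `Ω`. It fixes `u₀` and changes the sign of `uᵢ`; since it is an isometry, it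
transforms both gradients by the same orthogonal map, so the integrand `⟨∇u₀, ∇uᵢ⟩` is odd
under it. A measure-preserving change of variables then shows the integral equals its own
negative.
-/

section Gradient

variable {𝕜 E F : Type*} [RCLike 𝕜] [NormedAddCommGroup E] [InnerProductSpace 𝕜 E]
  [CompleteSpace E] [NormedAddCommGroup F] [InnerProductSpace 𝕜 F] [CompleteSpace F]

theorem gradient_neg (f : E → 𝕜) (x : E) : gradient (-f) x = -gradient f x := by
  rw [gradient, gradient, fderiv_neg, map_neg]

theorem gradient_comp_linearIsometryEquiv (f : F → 𝕜) (e : E ≃ₗᵢ[𝕜] F) (x : E) :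
    gradient (f ∘ e) x = e.symm (gradient f (e x)) := by
  refine ext_inner_right 𝕜 fun v => ?_
  rw [← e.inner_map_map (e.symm _), e.apply_symm_apply, gradient, gradient,
    InnerProductSpace.toDual_symm_apply, InnerProductSpace.toDual_symm_apply]
  exact DFunLike.congr_fun (e.toContinuousLinearEquiv.comp_right_fderiv (f := f) (x := x)) v

end Gradient

theorem inner_gradient_apply_eq_neg_of_comp_eq
    {E : Type*} [NormedAddCommGroup E] [InnerProductSpace ℝ E] [CompleteSpace E]
    {f g : E → ℝ} (e : E ≃ₗᵢ[ℝ] E) (hf : f ∘ e = f) (hg : g ∘ e = -g) (x : E) :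
    ⟪gradient f (e x), gradient g (e x)⟫ = -⟪gradient f x, gradient g x⟫ :=
  calc ⟪gradient f (e x), gradient g (e x)⟫
      = ⟪e.symm (gradient f (e x)), e.symm (gradient g (e x))⟫ := (e.symm.inner_map_map _ _).symm
    _ = ⟪gradient (f ∘ e) x, gradient (g ∘ e) x⟫ := by
      rw [gradient_comp_linearIsometryEquiv, gradient_comp_linearIsometryEquiv]
    _ = -⟪gradient f x, gradient g x⟫ := by rw [hf, hg, gradient_neg, inner_neg_right]

theorem MeasureTheory.MeasurePreserving.setIntegral_eq_zero_of_comp_eq_neg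
    {α G : Type*} [MeasurableSpace α] [NormedAddCommGroup G] [NormedSpace ℝ G]
    {μ : Measure α} {e : α → α} (he : MeasurePreserving e μ μ) (he' : MeasurableEmbedding e)
    {s : Set α} (hs : e '' s = s) {g : α → G} (hg : ∀ x, g (e x) = -g x) :
    ∫ x in s, g x ∂μ = 0 := by
  have h := he.setIntegral_image_emb he' g s
  simp only [hs, hg, integral_neg] at h
  have h2 : (2 : ℝ) • ∫ x in s, g x ∂μ = 0 := by
    rw [two_smul]
    nth_rw 1 [h]
    exact neg_add_cancel _
  exact (smul_eq_zero.mp h2).resolve_left two_ne_zero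

noncomputable def negCoordPair (n : ℕ) (i j : Fin n) :
    EuclideanSpace ℝ (Fin n) ≃ₗᵢ[ℝ] EuclideanSpace ℝ (Fin n) :=
  LinearIsometryEquiv.piLpCongrRight 2
    (fun k => if k = i ∨ k = j then LinearIsometryEquiv.neg ℝ else .refl ℝ ℝ)

theorem negCoordPair_apply (n : ℕ) (i j : Fin n) (x : EuclideanSpace ℝ (Fin n)) (k : Fin n) :
    negCoordPair n i j x k = if k = i ∨ k = j then -x k else x k := by
  rw [negCoordPair, LinearIsometryEquiv.piLpCongrRight_apply]
  by_cases h : k = i ∨ k = j <;> simp [h]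

theorem negCoordPair_eq_planeRotation_comp_planeRotation (n : ℕ) {i j : Fin n} (hij : i ≠ j) :
    ⇑(negCoordPair n i j) = planeRotation n i j ∘ planeRotation n i j := by
  funext x
  ext k
  rw [negCoordPair_apply]
  by_cases hki : k = i
  · subst hki
    simp [planeRotation, hij.symm]
  · by_cases hkj : k = j
    · subst hkj
      simp [planeRotation, hij.symm]
    · simp [planeRotation, hki, hkj]

theorem integral_inner_gradient_radial_with_test_function_eq_zero_general
    (n : ℕ) (hn : 2 ≤ n)
    (f₁ : ℝ → ℝ)
    (Ω : Set (EuclideanSpace ℝ (Fin n)))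
    (hinv : ∀ i j : Fin n, i ≠ j → planeRotation n i j '' Ω = Ω)
    (u₀ : EuclideanSpace ℝ (Fin n) → ℝ)
    (hu₀ : ∀ x : EuclideanSpace ℝ (Fin n), u₀ x = f₁ ‖x‖)
    (u : Fin n → EuclideanSpace ℝ (Fin n) → ℝ)
    (hu : ∀ (i : Fin n) (x : EuclideanSpace ℝ (Fin n)), u i x = f₁ ‖x‖ * x i / ‖x‖)
    (i : Fin n) :
    ∫ x in Ω, ⟪gradient u₀ x, gradient (u i) x⟫ = 0 := by
  have : Nontrivial (Fin n) := Fin.nontrivial_iff_two_le.mpr hn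
  obtain ⟨j, hji⟩ := exists_ne i
  set e := negCoordPair n i j
  have hΩ : e '' Ω = Ω := by
    rw [negCoordPair_eq_planeRotation_comp_planeRotation n hji.symm, Set.image_comp,
      hinv i j hji.symm, hinv i j hji.symm]
  have hu₀e : u₀ ∘ e = u₀ := funext fun x => by
    rw [Function.comp_apply, hu₀, hu₀, e.norm_map]
  have huie : u i ∘ e = -u i := funext fun x => by
    rw [Function.comp_apply, Pi.neg_apply, hu, hu, e.norm_map, negCoordPair_apply,
      if_pos (Or.inl rfl)]
    ring
  exact e.measurePreserving.setIntegral_eq_zero_of_comp_eq_neg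
    e.toHomeomorph.measurableEmbedding hΩ (inner_gradient_apply_eq_neg_of_comp_eq e hu₀e huie)

/-- For `f₁(r) = r − R₁ⁿ/r^{n−1}`, `u₀(x) = f₁(‖x‖)`, `uᵢ(x) = f₁(‖x‖) xᵢ/‖x‖`, and a
bounded measurable set `Ω ⊆ ℝⁿ \ {0}` invariant under the rotation by `π/2` in every
coordinate plane, we have `∫_Ω ⟨∇u₀, ∇uᵢ⟩ dV = 0` for every `i`. -/
theorem integral_inner_gradient_radial_with_test_function_eq_zero
    (n : ℕ) (hn : 2 ≤ n) (R₁ : ℝ) (hR₁ : 0 < R₁)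
    (f₁ : ℝ → ℝ) (hf₁ : ∀ r : ℝ, f₁ r = r - R₁ ^ n / r ^ (n - 1))
    (Ω : Set (EuclideanSpace ℝ (Fin n))) (hΩ : MeasurableSet Ω)
    (hΩ0 : (0 : EuclideanSpace ℝ (Fin n)) ∉ Ω) (hΩb : Bornology.IsBounded Ω)
    (hinv : ∀ i j : Fin n, i ≠ j → planeRotation n i j '' Ω = Ω)
    (u₀ : EuclideanSpace ℝ (Fin n) → ℝ)
    (hu₀ : ∀ x : EuclideanSpace ℝ (Fin n), u₀ x = f₁ ‖x‖)
    (u : Fin n → EuclideanSpace ℝ (Fin n) → ℝ)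
    (hu : ∀ (i : Fin n) (x : EuclideanSpace ℝ (Fin n)), u i x = f₁ ‖x‖ * x i / ‖x‖)
    (i : Fin n) :
    ∫ x in Ω, ⟪gradient u₀ x, gradient (u i) x⟫ = 0 :=
  integral_inner_gradient_radial_with_test_function_eq_zero_general n hn f₁ Ω hinv u₀ hu₀ u hu i
end

section
/- Fix an integer n ≥ 2 and real numbers 0 < R₁ < R₂. Let f₁(r) = r − R₁ⁿ/r^{n−1} and F(r) = (f₁'(r))² + ((n−1)/r²)·f₁(r)². Let Ω₀ = B_{R₂} \ closure(B_{R₁}) be the open annulus in ℝⁿ centered at the origin, and let Ω ⊆ ℝⁿ be a measurable set disjoint from the closed ball of radius R₁ centered at the origin, with Lebesgue measure Vol(Ω) = Vol(Ω₀). Then ∫_Ω F(‖x‖) dV ≤ ∫_{Ω₀} F(‖x‖) dV. -/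
open MeasureTheory

/-! By the closed form `F(r) = n (1 + (n - 1) (R₁ / r)^{2n})`, `F` is decreasing on `(0, ∞)`.
Since `Ω` and the annulus `Ω₀` have equal volume, so do `Ω \ Ω₀` and `Ω₀ \ Ω`. On the first
`‖x‖ ≥ R₂` and on the second `‖x‖ < R₂`, so `F(‖x‖) ≤ F(R₂)` on the first and `F(‖x‖) ≥ F(R₂)`
on the second, while the integrals over `Ω ∩ Ω₀` are common to both sides. -/

open Set

theorem setIntegral_le_setIntegral_of_measure_eq {α : Type*} [MeasurableSpace α] {μ : Measure α}
    {s t : Set α} {g : α → ℝ} (c : ℝ) (hs : MeasurableSet s) (ht : MeasurableSet t)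
    (hμ : μ s = μ t) (hμt : μ t ≠ ⊤) (hgs : IntegrableOn g s μ) (hgt : IntegrableOn g t μ)
    (h_out : ∀ x ∈ s \ t, g x ≤ c) (h_in : ∀ x ∈ t \ s, c ≤ g x) :
    ∫ x in s, g x ∂μ ≤ ∫ x in t, g x ∂μ := by
  have hμs : μ s ≠ ⊤ := hμ ▸ hμt
  have h_swap : μ (s \ t) = μ (t \ s) :=
    measure_sdiff_symm hs.nullMeasurableSet ht.nullMeasurableSet hμ
      (measure_ne_top_of_subset inter_subset_right hμt)
  rw [← integral_inter_add_sdiff ht hgs, ← integral_inter_add_sdiff hs hgt, inter_comm t s]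
  gcongr _ + ?_
  calc ∫ x in s \ t, g x ∂μ ≤ ∫ _ in s \ t, c ∂μ :=
        setIntegral_mono_on (hgs.mono_set sdiff_subset)
          (integrableOn_const (measure_ne_top_of_subset sdiff_subset hμs)) (hs.diff ht) h_out
    _ = ∫ _ in t \ s, c ∂μ := by simp only [setIntegral_const, measureReal_def, h_swap]
    _ ≤ ∫ x in t \ s, g x ∂μ :=
        setIntegral_mono_on (integrableOn_const (measure_ne_top_of_subset sdiff_subset hμt))
          (hgt.mono_set sdiff_subset) (ht.diff hs) h_in

theorem integrableOn_comp_norm_of_antitoneOn {E : Type*} [NormedAddCommGroup E]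
    [MeasurableSpace E] [OpensMeasurableSpace E] {μ : Measure E} {F : ℝ → ℝ} {R : ℝ}
    {s : Set E} (hF : Measurable F) (hF_anti : AntitoneOn F (Ici R))
    (hF_nonneg : ∀ r ∈ Ici R, 0 ≤ F r) (hs : MeasurableSet s) (hμs : μ s ≠ ⊤)
    (hsR : ∀ x ∈ s, R ≤ ‖x‖) :
    IntegrableOn (fun x => F ‖x‖) s μ := by
  refine Measure.integrableOn_of_bounded hμs (hF.comp measurable_norm).aestronglyMeasurable
    (M := F R) (ae_restrict_of_forall_mem hs fun x hx => ?_)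
  rw [Real.norm_of_nonneg (hF_nonneg _ (hsR x hx))]
  exact hF_anti self_mem_Ici (hsR x hx) (hsR x hx)

theorem hasDerivAt_id_sub_div_pow (a : ℝ) (k : ℕ) {r : ℝ} (hr : r ≠ 0) :
    HasDerivAt (fun x => x - a / x ^ k) (1 + k * a / r ^ (k + 1)) r := by
  have h_zpow := (hasDerivAt_zpow (-(k : ℤ)) r (Or.inl hr)).const_mul a
  have h_eq (x : ℝ) : a / x ^ k = a * x ^ (-(k : ℤ)) := by
    rw [zpow_neg, zpow_natCast, div_eq_mul_inv]
  simp_rw [h_eq]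
  refine ((hasDerivAt_id r).sub h_zpow).congr_deriv ?_
  rw [show -(k : ℤ) - 1 = -((k + 1 : ℕ) : ℤ) by push_cast; ring, zpow_neg, zpow_natCast]
  push_cast
  ring

section Energy

variable {n : ℕ} {a : ℝ} {f F : ℝ → ℝ}

theorem energy_eq (hn : 1 ≤ n) (hf : ∀ r, f r = r - a / r ^ (n - 1))
    (hF : ∀ r, F r = deriv f r ^ 2 + ((n : ℝ) - 1) / r ^ 2 * f r ^ 2) {r : ℝ} (hr : r ≠ 0) :
    F r = n * (1 + (n - 1) * (a / r ^ n) ^ 2) := by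
  obtain ⟨k, rfl⟩ : ∃ k, n = k + 1 := ⟨n - 1, by omega⟩
  have h_deriv : deriv f r = 1 + k * a / r ^ (k + 1) := by
    rw [funext hf, Nat.add_sub_cancel]
    exact (hasDerivAt_id_sub_div_pow a k hr).deriv
  rw [hF, h_deriv, hf, Nat.add_sub_cancel]
  push_cast
  field_simp
  ring

theorem energy_nonneg (hn : 1 ≤ n) (hf : ∀ r, f r = r - a / r ^ (n - 1))
    (hF : ∀ r, F r = deriv f r ^ 2 + ((n : ℝ) - 1) / r ^ 2 * f r ^ 2) {r : ℝ} (hr : r ≠ 0) :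
    0 ≤ F r := by
  have hn' : (0 : ℝ) ≤ n - 1 := sub_nonneg.2 (by exact_mod_cast hn)
  rw [energy_eq hn hf hF hr]
  positivity

theorem energy_antitoneOn (hn : 1 ≤ n) (ha : 0 ≤ a) (hf : ∀ r, f r = r - a / r ^ (n - 1))
    (hF : ∀ r, F r = deriv f r ^ 2 + ((n : ℝ) - 1) / r ^ 2 * f r ^ 2) :
    AntitoneOn F (Ioi 0) := by
  intro s (hs : 0 < s) t (ht : 0 < t) hst
  have hn' : (0 : ℝ) ≤ n - 1 := sub_nonneg.2 (by exact_mod_cast hn)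
  rw [energy_eq hn hf hF ht.ne', energy_eq hn hf hF hs.ne']
  gcongr

theorem measurable_energy (hf : ∀ r, f r = r - a / r ^ (n - 1))
    (hF : ∀ r, F r = deriv f r ^ 2 + ((n : ℝ) - 1) / r ^ 2 * f r ^ 2) : Measurable F := by
  have hf_meas : Measurable f := by
    rw [funext hf]; fun_prop
  rw [funext hF]
  fun_prop

end Energy

/-- For `f₁(r) = r − R₁ⁿ/r^{n−1}` and `F(r) = f₁'(r)² + ((n−1)/r²) f₁(r)²`, if
`Ω₀ = B_{R₂} \ closure(B_{R₁})` is the concentric annulus and `Ω` is a measurable set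
disjoint from `closedBall 0 R₁` with the same volume as `Ω₀`, then
`∫_Ω F(‖x‖) dV ≤ ∫_{Ω₀} F(‖x‖) dV`. -/
theorem integral_F_le_integral_F_annulus
    (n : ℕ) (hn : 2 ≤ n) (R₁ R₂ : ℝ) (hR₁ : 0 < R₁) (hR₁R₂ : R₁ < R₂)
    (f₁ F : ℝ → ℝ)
    (hf₁ : ∀ r : ℝ, f₁ r = r - R₁ ^ n / r ^ (n - 1))
    (hF : ∀ r : ℝ, F r = (deriv f₁ r) ^ 2 + ((n : ℝ) - 1) / r ^ 2 * (f₁ r) ^ 2)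
    (Ω : Set (EuclideanSpace ℝ (Fin n))) (hΩ : MeasurableSet Ω)
    (hdisj : Disjoint Ω (Metric.closedBall (0 : EuclideanSpace ℝ (Fin n)) R₁))
    (hvol : volume Ω =
      volume (Metric.ball (0 : EuclideanSpace ℝ (Fin n)) R₂ \
        Metric.closedBall (0 : EuclideanSpace ℝ (Fin n)) R₁)) :
    ∫ x in Ω, F ‖x‖ ≤
      ∫ x in Metric.ball (0 : EuclideanSpace ℝ (Fin n)) R₂ \
        Metric.closedBall (0 : EuclideanSpace ℝ (Fin n)) R₁, F ‖x‖ := by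
  set Ω₀ := Metric.ball (0 : EuclideanSpace ℝ (Fin n)) R₂ \ Metric.closedBall 0 R₁
  have hn₁ : 1 ≤ n := by omega
  have hF_meas : Measurable F := measurable_energy hf₁ hF
  have hF_anti : AntitoneOn F (Ici R₁) :=
    (energy_antitoneOn hn₁ (by positivity) hf₁ hF).mono fun r hr => hR₁.trans_le hr
  have hF_nonneg : ∀ r ∈ Ici R₁, 0 ≤ F r :=
    fun r hr => energy_nonneg hn₁ hf₁ hF (hR₁.trans_le hr).ne'
  have hΩ₀ : MeasurableSet Ω₀ := measurableSet_ball.diff measurableSet_closedBall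
  have hΩ₀_fin : volume Ω₀ ≠ ⊤ := measure_ne_top_of_subset sdiff_subset measure_ball_lt_top.ne
  have hΩ_norm : ∀ x ∈ Ω, R₁ ≤ ‖x‖ := fun x hx =>
    (not_le.1 fun h => disjoint_left.1 hdisj hx (mem_closedBall_zero_iff.2 h)).le
  have hΩ₀_norm : ∀ x ∈ Ω₀, R₁ ≤ ‖x‖ := fun x hx =>
    (not_le.1 fun h => hx.2 (mem_closedBall_zero_iff.2 h)).le
  refine setIntegral_le_setIntegral_of_measure_eq (F R₂) hΩ hΩ₀ hvol hΩ₀_fin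
    (integrableOn_comp_norm_of_antitoneOn hF_meas hF_anti hF_nonneg hΩ (hvol ▸ hΩ₀_fin) hΩ_norm)
    (integrableOn_comp_norm_of_antitoneOn hF_meas hF_anti hF_nonneg hΩ₀ hΩ₀_fin hΩ₀_norm) ?_ ?_
  · rintro x ⟨hxΩ, hxΩ₀⟩
    have hR₂x : R₂ ≤ ‖x‖ :=
      not_lt.1 fun h => hxΩ₀ ⟨mem_ball_zero_iff.2 h, disjoint_left.1 hdisj hxΩ⟩
    exact hF_anti hR₁R₂.le (hR₁R₂.le.trans hR₂x) hR₂x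
  · rintro x ⟨hxΩ₀, -⟩
    exact hF_anti (hΩ₀_norm x hxΩ₀) hR₁R₂.le (mem_ball_zero_iff.1 hxΩ₀.1).le
end

section
/- Fix an integer n ≥ 2 and real numbers 0 < R₁ < R₂. Let f₁(r) = r − R₁ⁿ/r^{n−1} and F(r) = (f₁'(r))² + ((n−1)/r²)·f₁(r)². Then ∫_{R₁}^{R₂} F(r)·r^{n−1} dr = ((R₂ⁿ + (n−1)·R₁ⁿ) / (R₂^{n+1} − R₂·R₁ⁿ)) · f₁(R₂)² · R₂^{n−1}. -/
/-!
With `a = R₁ⁿ` and `k = n - 1`, the profile `f(r) = r - a / r^k` solves the radial equation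
`(r^k f')' = (k / r²) f r^k`, since `r^k f'(r) = r^k + k a / r` and `f(r) r^k = r^(k+1) - a`.
Hence `(f f' r^k)' = (f'² + (k / r²) f²) r^k`, so the integral is the boundary term
`f(R₂) f'(R₂) R₂^k` (as `f(R₁) = 0`), and `f'(R₂) = σ₂ f(R₂)`.
-/

theorem hasDerivAt_pow_of_ne_zero {𝕜 : Type*} [NontriviallyNormedField 𝕜] {x : 𝕜} (k : ℕ)
    (hx : x ≠ 0) : HasDerivAt (fun y => y ^ k) (k * x ^ k / x) x := by
  refine (hasDerivAt_pow k x).congr_deriv ?_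
  rcases k with _ | k
  · simp
  · rw [Nat.add_sub_cancel, pow_succ, mul_div_assoc, mul_div_cancel_right₀ _ hx]

namespace AnnulusProfile

noncomputable def profile (a : ℝ) (k : ℕ) (r : ℝ) : ℝ := r - a / r ^ k

noncomputable def profileDeriv (a : ℝ) (k : ℕ) (r : ℝ) : ℝ := 1 + k * a / r ^ (k + 1)

noncomputable def energyDensity (a : ℝ) (k : ℕ) (r : ℝ) : ℝ :=
  (profileDeriv a k r ^ 2 + k / r ^ 2 * profile a k r ^ 2) * r ^ k

variable {a : ℝ} {k : ℕ} {r : ℝ}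

theorem hasDerivAt_profile (hr : r ≠ 0) :
    HasDerivAt (profile a k) (profileDeriv a k r) r := by
  refine HasDerivAt.congr_deriv (f := profile a k) ((hasDerivAt_id r).sub
    ((hasDerivAt_const r a).div (hasDerivAt_pow_of_ne_zero k hr) (pow_ne_zero k hr))) ?_
  simp only [profileDeriv, pow_succ]
  field_simp
  ring

theorem deriv_profile (hr : r ≠ 0) : deriv (profile a k) r = profileDeriv a k r :=
  (hasDerivAt_profile hr).deriv

theorem hasDerivAt_profileDeriv_mul_pow (hr : r ≠ 0) :
    HasDerivAt (fun r => profileDeriv a k r * r ^ k) (k / r ^ 2 * profile a k r * r ^ k) r := by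
  refine HasDerivAt.congr_deriv (f := fun r => profileDeriv a k r * r ^ k)
    (((hasDerivAt_const r (k * a)).div (hasDerivAt_pow_of_ne_zero (k + 1) hr)
      (pow_ne_zero _ hr) |>.const_add 1).mul (hasDerivAt_pow_of_ne_zero k hr)) ?_
  simp only [profile, Pi.div_apply, pow_succ]
  push_cast
  field_simp
  ring

theorem hasDerivAt_profile_mul_profileDeriv_mul_pow (hr : r ≠ 0) :
    HasDerivAt (fun r => profile a k r * (profileDeriv a k r * r ^ k)) (energyDensity a k r) r := by
  refine ((hasDerivAt_profile hr).mul (hasDerivAt_profileDeriv_mul_pow hr)).congr_deriv ?_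
  simp only [energyDensity]
  ring

theorem continuousOn_energyDensity {s : Set ℝ} (hs : (0 : ℝ) ∉ s) :
    ContinuousOn (energyDensity a k) s := by
  have hne : ∀ x ∈ s, x ≠ 0 := fun x hx h => hs (h ▸ hx)
  unfold energyDensity profileDeriv profile
  fun_prop (disch := simp_all)

theorem integral_energyDensity {R₁ R₂ : ℝ} (h : (0 : ℝ) ∉ Set.uIcc R₁ R₂) :
    ∫ r in R₁..R₂, energyDensity a k r =
      profile a k R₂ * (profileDeriv a k R₂ * R₂ ^ k)
        - profile a k R₁ * (profileDeriv a k R₁ * R₁ ^ k) :=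
  intervalIntegral.integral_eq_sub_of_hasDerivAt
    (fun _ hx => hasDerivAt_profile_mul_profileDeriv_mul_pow fun h0 => h (h0 ▸ hx))
    (continuousOn_energyDensity h).intervalIntegrable

theorem profile_pow_succ_self (hr : r ≠ 0) : profile (r ^ (k + 1)) k r = 0 := by
  simp [profile, pow_succ, mul_div_cancel_left₀ _ (pow_ne_zero k hr)]

theorem profileDeriv_eq_mul_profile (hr : r ≠ 0) (ha : r ^ (k + 1) ≠ a) :
    profileDeriv a k r = (r ^ (k + 1) + k * a) / (r ^ (k + 2) - r * a) * profile a k r := by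
  have hsub : r ^ (k + 1) - a ≠ 0 := sub_ne_zero.2 ha
  have hden : r ^ (k + 2) - r * a = r * (r ^ (k + 1) - a) := by ring
  rw [hden, profileDeriv, profile]
  field_simp
  ring

end AnnulusProfile

open AnnulusProfile in
/-- For `f₁(r) = r − R₁ⁿ/r^{n−1}` and `F(r) = f₁'(r)² + ((n−1)/r²) f₁(r)²`, one has
`∫_{R₁}^{R₂} F(r) r^{n−1} dr
  = ((R₂ⁿ + (n−1) R₁ⁿ)/(R₂^{n+1} − R₂ R₁ⁿ)) f₁(R₂)² R₂^{n−1}`,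
identifying the Rayleigh quotient of the test functions on the annulus with the
second Steklov–Dirichlet eigenvalue. -/
theorem integral_F_rpow (n : ℕ) (hn : 2 ≤ n) (R₁ R₂ : ℝ) (hR₁ : 0 < R₁)
    (hR₁R₂ : R₁ < R₂) (f₁ F : ℝ → ℝ)
    (hf₁ : ∀ r : ℝ, f₁ r = r - R₁ ^ n / r ^ (n - 1))
    (hF : ∀ r : ℝ, F r = (deriv f₁ r) ^ 2 + ((n : ℝ) - 1) / r ^ 2 * (f₁ r) ^ 2) :
    ∫ r in R₁..R₂, F r * r ^ (n - 1) =
      (R₂ ^ n + ((n : ℝ) - 1) * R₁ ^ n) / (R₂ ^ (n + 1) - R₂ * R₁ ^ n)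
        * (f₁ R₂) ^ 2 * R₂ ^ (n - 1) := by
  obtain ⟨k, rfl⟩ : ∃ k, n = k + 1 := ⟨n - 1, by omega⟩
  have hf : f₁ = profile (R₁ ^ (k + 1)) k := funext hf₁
  subst hf
  have hR₂ : 0 < R₂ := hR₁.trans hR₁R₂
  have h0 : (0 : ℝ) ∉ Set.uIcc R₁ R₂ := Set.notMem_uIcc_of_lt hR₁ hR₂
  have hF' : Set.EqOn (fun r => F r * r ^ (k + 1 - 1)) (energyDensity (R₁ ^ (k + 1)) k)
      (Set.uIcc R₁ R₂) := fun r hr => by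
    dsimp only
    rw [hF, deriv_profile fun h => h0 (h ▸ hr), energyDensity]
    push_cast
    ring
  have hpow : R₂ ^ (k + 1) ≠ R₁ ^ (k + 1) :=
    (pow_lt_pow_left₀ hR₁R₂ hR₁.le k.succ_ne_zero).ne'
  rw [intervalIntegral.integral_congr hF', integral_energyDensity h0,
    profile_pow_succ_self hR₁.ne', profileDeriv_eq_mul_profile hR₂.ne' hpow]
  push_cast
  ring
end
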